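/- For every x ∈ [0,1]^V with x ≠ 0, one has x ∈ R(G) if and only if ‖x‖ < ρ(x/‖x‖). (Lemma 4.3(2).) -/

import Mathlib

/-!
Along a ray `r ↦ r • u` with `u ≥ 0`, `u ≠ 0`, the function `r ↦ min_{V'} 𝕶_{G,V'}(r • u)` is
continuous, equals `1` at `r = 0` and is `≤ 0` at `r = 1 / u_v` (look at `V' = {v}`), so `ρ(u)`
is its first zero and it is positive on `[0, ρ(u))`. Conversely, the deletion–contraction identity
`𝕶_{G,V' ∪ {v}} = 𝕶_{G,V'} - x_v 𝕶_{G,V' ∩ N(v)}` shows that lowering a coordinate cannot destroy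
positivity of all clique polynomials, so positivity at `r • u` forces positivity on `[0, r]`,
hence `r < ρ(u)`.
-/

open scoped Classical ENNReal

set_option linter.unusedSectionVars false

variable {V : Type*} [Fintype V] [DecidableEq V]

/-- An admissible swap exchanges two consecutive letters that are adjacent in `G`. -/
def AdjSwap (G : SimpleGraph V) (w w' : List V) : Prop :=
  ∃ (a b : List V) (u v : V), G.Adj u v ∧ w = a ++ u :: v :: b ∧ w' = a ++ v :: u :: b

/-- Two words are equivalent if one can be transformed into the other by finitely many
admissible swaps. -/
def WordEquiv (G : SimpleGraph V) : List V → List V → Prop :=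
  Relation.ReflTransGen (AdjSwap G)

lemma adjSwap_symm (G : SimpleGraph V) : Symmetric (AdjSwap G) := by
  rintro w w' ⟨a, b, u, v, h, rfl, rfl⟩
  exact ⟨a, b, v, u, h.symm, rfl, rfl⟩

/-- The setoid of words modulo admissible swaps. -/
def wordSetoid (G : SimpleGraph V) : Setoid (List V) where
  r := WordEquiv G
  iseqv := ⟨fun _ => Relation.ReflTransGen.refl,
    fun h => by
      unfold WordEquiv at *
      induction h with
      | refl => exact Relation.ReflTransGen.refl
      | tail _ hs ih => exact Relation.ReflTransGen.head (adjSwap_symm G hs) ih,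
    fun h h' => Relation.ReflTransGen.trans h h'⟩

/-- A word is `G`-reduced if between any two equal letters there is a letter distinct from
them and not adjacent to them. -/
def IsGReduced (G : SimpleGraph V) (w : List V) : Prop :=
  ∀ i j : Fin w.length, i < j → w.get i = w.get j →
    ∃ k : Fin w.length, i < k ∧ k < j ∧ w.get k ≠ w.get i ∧ ¬ G.Adj (w.get k) (w.get i)

/-- The product `x_{w_1} ⋯ x_{w_ℓ}` depends only on the equivalence class of a word. -/
noncomputable def classProd (G : SimpleGraph V) (x : V → ℝ≥0∞) :
    Quotient (wordSetoid G) → ℝ≥0∞ :=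
  Quotient.lift (fun w : List V => (w.map x).prod) (by
    intro a b h
    induction h with
    | refl => rfl
    | tail _ hs ih =>
        obtain ⟨a', b', u, v, huv, rfl, rfl⟩ := hs
        rw [ih]
        simp only [List.map_append, List.prod_append, List.map_cons, List.prod_cons]
        ring)

/-- `tildeF G x` : the sum over all equivalence classes of words of `∏ x_{w_i}`,
valued in `[0,∞]`. -/
noncomputable def tildeF (G : SimpleGraph V) (x : V → ℝ) : ℝ≥0∞ :=
  ∑' c : Quotient (wordSetoid G), classProd G (fun v => ENNReal.ofReal (x v)) c

/-- `redF G x` : the sum over all equivalence classes of `G`-reduced words of `∏ x_{w_i}`,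
valued in `[0,∞]`. -/
noncomputable def redF (G : SimpleGraph V) (x : V → ℝ) : ℝ≥0∞ :=
  ∑' c : {c : Quotient (wordSetoid G) // ∃ w, IsGReduced G w ∧ Quotient.mk (wordSetoid G) w = c},
    classProd G (fun v => ENNReal.ofReal (x v)) c.1

/-- The clique polynomial `𝕶_{G,V'}(x) = ∑_{cliques K ⊆ V'} (-1)^{|K|} ∏_{v ∈ K} x_v`. -/
noncomputable def cliquePoly (G : SimpleGraph V) (V' : Finset V) (x : V → ℝ) : ℝ :=
  ∑ K ∈ V'.powerset.filter (fun K : Finset V => G.IsClique (K : Set V)),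
    (-1 : ℝ) ^ K.card * ∏ v ∈ K, x v

/-- The Euclidean norm on `ℝ^V`. -/
noncomputable def eucNorm (x : V → ℝ) : ℝ := Real.sqrt (∑ v, x v ^ 2)

/-- `min_{V' ⊆ V} 𝕶_{G,V'}(x)`. -/
noncomputable def minK (G : SimpleGraph V) (x : V → ℝ) : ℝ :=
  Finset.univ.inf' ⟨∅, Finset.mem_univ _⟩ fun V' : Finset V => cliquePoly G V' x

/-- `ρ(u) = inf {r ∈ [0,∞) : min_{V' ⊆ V} 𝕶_{G,V'}(r·u) = 0}`. -/
noncomputable def rho (G : SimpleGraph V) (u : V → ℝ) : ℝ :=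
  sInf {r : ℝ | 0 ≤ r ∧ minK G (r • u) = 0}

/-- The region `R(G) = {x ∈ [0,1]^V : 𝕶_{G,V'}(x) > 0 for all V' ⊆ V}`. -/
def regionR (G : SimpleGraph V) : Set (V → ℝ) :=
  {x | (∀ v, x v ∈ Set.Icc (0 : ℝ) 1) ∧ ∀ V' : Finset V, 0 < cliquePoly G V' x}


section

variable (G : SimpleGraph V)

lemma cliquePoly_eq_sum_powerset (W : Finset V) (x : V → ℝ) :
    cliquePoly G W x = ∑ K ∈ W.powerset,
      if G.IsClique (K : Set V) then (-1 : ℝ) ^ K.card * ∏ v ∈ K, x v else 0 :=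
  Finset.sum_filter _ _

lemma cliquePoly_empty (x : V → ℝ) : cliquePoly G ∅ x = 1 := by
  simp [cliquePoly_eq_sum_powerset]

/-- Deletion–contraction: a clique through `v` is `v` together with a clique of neighbours
of `v`. -/
lemma cliquePoly_insert {W : Finset V} {v : V} (hv : v ∉ W) (x : V → ℝ) :
    cliquePoly G (insert v W) x =
      cliquePoly G W x - x v * cliquePoly G (W.filter (G.Adj v)) x := by
  simp only [cliquePoly_eq_sum_powerset, Finset.sum_powerset_insert hv, sub_eq_add_neg,
    Finset.mul_sum, ← Finset.sum_neg_distrib]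
  congr 1
  refine (Finset.sum_subset (Finset.powerset_mono.2 (Finset.filter_subset _ _)) ?_).symm.trans
    (Finset.sum_congr rfl ?_)
  · intro K hKW hKN
    obtain ⟨b, hbK, hb⟩ := Finset.not_subset.1 (mt Finset.mem_powerset.2 hKN)
    have hbW := Finset.mem_powerset.1 hKW hbK
    refine if_neg ?_
    rw [Finset.coe_insert, SimpleGraph.isClique_insert]
    exact fun h => hb (Finset.mem_filter.2 ⟨hbW, h.2 b hbK (ne_of_mem_of_not_mem hbW hv).symm⟩)
  · intro K hK
    have hKN := Finset.mem_powerset.1 hK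
    have hvK : v ∉ K := fun h => hv (Finset.mem_filter.1 (hKN h)).1
    have hclique : G.IsClique (insert v K : Set V) ↔ G.IsClique (K : Set V) := by
      rw [SimpleGraph.isClique_insert]
      exact and_iff_left fun b hb _ => (Finset.mem_filter.1 (hKN hb)).2
    simp only [Finset.coe_insert, hclique, Finset.card_insert_of_notMem hvK, Finset.prod_insert hvK]
    split_ifs <;> ring

lemma cliquePoly_zero (W : Finset V) : cliquePoly G W 0 = 1 := by
  induction W using Finset.induction_on with
  | empty => exact cliquePoly_empty G 0
  | insert v W hv ih => rw [cliquePoly_insert G hv, ih, Pi.zero_apply, zero_mul, sub_zero]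

lemma cliquePoly_singleton (v : V) (x : V → ℝ) : cliquePoly G {v} x = 1 - x v := by
  rw [← insert_empty_eq, cliquePoly_insert G (Finset.notMem_empty v), Finset.filter_empty,
    cliquePoly_empty, mul_one]

lemma cliquePoly_congr (W : Finset V) {x y : V → ℝ} (h : ∀ v ∈ W, x v = y v) :
    cliquePoly G W x = cliquePoly G W y :=
  Finset.sum_congr rfl fun _ hK =>
    congrArg _ (Finset.prod_congr rfl fun v hv =>
      h v (Finset.mem_powerset.1 (Finset.mem_filter.1 hK).1 hv))

lemma continuous_cliquePoly (W : Finset V) : Continuous (cliquePoly G W) := by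
  unfold cliquePoly
  fun_prop

lemma cliquePoly_le_update {z : V → ℝ} (hz : ∀ U, 0 ≤ cliquePoly G U z) {v : V} {t : ℝ}
    (ht : t ≤ z v) (W : Finset V) :
    cliquePoly G W z ≤ cliquePoly G W (Function.update z v t) := by
  have hagree : ∀ U : Finset V, v ∉ U →
      cliquePoly G U z = cliquePoly G U (Function.update z v t) := fun U hvU =>
    cliquePoly_congr G U fun w hw => (Function.update_of_ne (ne_of_mem_of_not_mem hw hvU) _ _).symm
  by_cases hvW : v ∈ W
  · have hvE := Finset.notMem_erase v W
    rw [← Finset.insert_erase hvW, cliquePoly_insert G hvE, cliquePoly_insert G hvE,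
      ← hagree _ hvE, ← hagree _ fun h => hvE (Finset.mem_filter.1 h).1, Function.update_self]
    nlinarith [hz ((W.erase v).filter (G.Adj v))]
  · exact (hagree W hvW).le

-- The points between `x` and `y` are reached by lowering one coordinate at a time.
lemma cliquePoly_le_of_le {x y : V → ℝ} (hx : ∀ U, 0 < cliquePoly G U x) (hyx : y ≤ x)
    (W : Finset V) : cliquePoly G W x ≤ cliquePoly G W y := by
  suffices h : ∀ D : Finset V, ∀ U, cliquePoly G U x ≤ cliquePoly G U (D.piecewise y x) by
    simpa using h Finset.univ W
  intro D
  induction D using Finset.induction_on with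
  | empty => simp
  | insert v D hv ih =>
    intro U
    rw [Finset.piecewise_insert]
    refine (ih U).trans (cliquePoly_le_update G (fun U => ((hx U).trans_le (ih U)).le) ?_ U)
    rw [Finset.piecewise_eq_of_notMem _ _ _ hv]
    exact hyx v

lemma minK_le (x : V → ℝ) (W : Finset V) : minK G x ≤ cliquePoly G W x :=
  Finset.inf'_le _ (Finset.mem_univ W)

lemma minK_pos_iff {x : V → ℝ} : 0 < minK G x ↔ ∀ W, 0 < cliquePoly G W x :=
  (Finset.lt_inf'_iff _).trans (by simp)

lemma minK_zero : minK G 0 = 1 :=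
  le_antisymm ((minK_le G 0 ∅).trans_eq (cliquePoly_zero G ∅))
    (Finset.le_inf' _ _ fun W _ => (cliquePoly_zero G W).ge)

lemma continuous_minK : Continuous (minK G) :=
  Continuous.finset_inf'_apply _ fun W _ => continuous_cliquePoly G W

lemma continuous_minK_smul (u : V → ℝ) : Continuous fun r : ℝ => minK G (r • u) :=
  (continuous_minK G).comp (continuous_id.smul continuous_const)

lemma mem_regionR_iff {x : V → ℝ} :
    x ∈ regionR G ↔ (∀ v, x v ∈ Set.Icc (0 : ℝ) 1) ∧ 0 < minK G x := by
  rw [minK_pos_iff]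
  rfl

section rho

variable {G} {u : V → ℝ}

lemma minK_smul_pos_of_lt_rho {r : ℝ} (hr0 : 0 ≤ r) (hr : r < rho G u) :
    0 < minK G (r • u) := by
  by_contra! hle
  obtain ⟨s, ⟨hs0, hsr⟩, hs⟩ :=
    intermediate_value_Icc' hr0 (continuous_minK_smul G u).continuousOn
    ⟨hle, by simp [minK_zero]⟩
  exact (csInf_le ⟨0, fun _ h => h.1⟩ ⟨hs0, hs⟩ : rho G u ≤ s).not_gt (hsr.trans_lt hr)

lemma exists_minK_smul_eq_zero {v : V} (hv : 0 < u v) :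
    ∃ r : ℝ, 0 ≤ r ∧ minK G (r • u) = 0 := by
  have hneg : minK G ((u v)⁻¹ • u) ≤ 0 := by
    have := minK_le G ((u v)⁻¹ • u) {v}
    rwa [cliquePoly_singleton, Pi.smul_apply, smul_eq_mul, inv_mul_cancel₀ hv.ne', sub_self]
      at this
  obtain ⟨r, ⟨hr0, -⟩, hr⟩ :=
    intermediate_value_Icc' (inv_nonneg.2 hv.le) (continuous_minK_smul G u).continuousOn
    ⟨hneg, by simp [minK_zero]⟩
  exact ⟨r, hr0, hr⟩

lemma minK_rho_smul {v : V} (hv : 0 < u v) : minK G (rho G u • u) = 0 := by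
  have hclosed : IsClosed {r : ℝ | 0 ≤ r ∧ minK G (r • u) = 0} :=
    isClosed_Ici.inter (isClosed_eq (continuous_minK_smul G u) continuous_const)
  exact (hclosed.csInf_mem (exists_minK_smul_eq_zero hv) ⟨0, fun _ h => h.1⟩).2

lemma lt_rho_of_minK_smul_pos (hu : 0 ≤ u) (hu0 : u ≠ 0) {r : ℝ} (hr : 0 < minK G (r • u)) :
    r < rho G u := by
  obtain ⟨v, hv⟩ := Function.ne_iff.1 hu0
  by_contra! hle
  have hpos := (minK_pos_iff G).1 hr
  have hρ : 0 < minK G (rho G u • u) := (minK_pos_iff G).2 fun W =>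
    (hpos W).trans_le (cliquePoly_le_of_le G hpos (smul_le_smul_of_nonneg_right hle hu) W)
  exact hρ.ne' (minK_rho_smul ((hu v).lt_of_ne' hv))

lemma minK_smul_pos_iff_lt_rho (hu : 0 ≤ u) (hu0 : u ≠ 0) {r : ℝ} (hr0 : 0 ≤ r) :
    0 < minK G (r • u) ↔ r < rho G u :=
  ⟨lt_rho_of_minK_smul_pos hu hu0, minK_smul_pos_of_lt_rho hr0⟩

end rho

end

lemma eucNorm_pos {x : V → ℝ} (hx : x ≠ 0) : 0 < eucNorm x := by
  have h : eucNorm x = ‖WithLp.toLp 2 x‖ := by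
    simp [eucNorm, EuclideanSpace.norm_eq]
  rw [h, norm_pos_iff]
  simpa using hx

/-- Lemma 4.3(2): for nonzero `x ∈ [0,1]^V`, `x ∈ R(G) ↔ ‖x‖ < ρ(x/‖x‖)`. -/
theorem mem_regionR_iff_lt_rho (G : SimpleGraph V) (x : V → ℝ)
    (hx : ∀ v, x v ∈ Set.Icc (0 : ℝ) 1) (hx0 : x ≠ 0) :
    x ∈ regionR G ↔ eucNorm x < rho G ((eucNorm x)⁻¹ • x) := by
  have hn := eucNorm_pos hx0
  have hu : 0 ≤ (eucNorm x)⁻¹ • x := smul_nonneg (inv_nonneg.2 hn.le) fun v => (hx v).1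
  have hu0 : (eucNorm x)⁻¹ • x ≠ 0 := smul_ne_zero (inv_ne_zero hn.ne') hx0
  rw [← minK_smul_pos_iff_lt_rho hu hu0 hn.le, smul_inv_smul₀ hn.ne', mem_regionR_iff,
    and_iff_right hx]
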